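/- Let L(t,x,ẋ) = L⁰(t,ẋ) + L¹(t,x), where L⁰, L¹ and their derivatives L⁰_ẋ, L¹_x, L¹_xx are continuous. Suppose x̄ is a piecewise C¹ admissible extremal (satisfying the integral Euler equation), E(L⁰)(t, x̄'(t), x̄'(t)+ξ) ≥ 0 for all ξ ∈ ℝⁿ and all non-corner t, and ηᵀ L¹_xx(t, x̄(t)+θη) η ≥ 0 for all η ∈ ℝⁿ, θ ∈ (0,1), and non-corner t. Then x̄ is an absolute minimizer: ∫_{t₀}^{t₁} L(t,x(t),x'(t)) dt ≥ ∫_{t₀}^{t₁} L(t,x̄(t),x̄'(t)) dt for all piecewise C¹ x with the same boundary values. -/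

import Mathlib

/-!
Put `p t = c + ∫ ν in t₀..t, L¹_x(ν, x̄ ν)`, so that the Euler equation reads `L⁰_ẋ(t, x̄' t) = p t`
off the corners, and let `Δ = x - x̄`. The Weierstrass condition bounds the `L⁰` increment below by
`⟪p, Δ'⟫`, and the Legendre condition, through the mean value theorem along the segment from `x̄`
to `x`, bounds the `L¹` increment below by `⟪p', Δ⟫`. Hence the increment of the action dominates
`∫ (⟪p, Δ'⟫ + ⟪p', Δ⟫) = ⟪p, Δ⟫ |_{t₀}^{t₁}`, which vanishes because `Δ` vanishes at both ends.
-/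

open RealInnerProductSpace

def PiecewiseC1On {E : Type*} [NormedAddCommGroup E] [NormedSpace ℝ E]
    (a b : ℝ) (S : Finset ℝ) (x dx : ℝ → E) : Prop :=
  ContinuousOn x (Set.Icc a b) ∧
  (∃ M : ℝ, ∀ t ∈ Set.Icc a b, ‖dx t‖ ≤ M) ∧
  (∀ t ∈ Set.Icc a b \ (S : Set ℝ), HasDerivWithinAt x (dx t) (Set.Icc a b) t) ∧
  ContinuousOn dx (Set.Icc a b \ (S : Set ℝ))

open MeasureTheory Set

theorem intervalIntegral.integral_mono_of_le_off_countable {f g : ℝ → ℝ} {a b : ℝ} {T : Set ℝ}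
    (hab : a ≤ b) (hT : T.Countable) (hf : IntervalIntegrable f volume a b)
    (hg : IntervalIntegrable g volume a b) (hfg : ∀ t ∈ Icc a b \ T, f t ≤ g t) :
    ∫ t in a..b, f t ≤ ∫ t in a..b, g t := by
  refine intervalIntegral.integral_mono_ae_restrict hab hf hg ?_
  filter_upwards [hT.ae_notMem (volume.restrict (Icc a b)), ae_restrict_mem measurableSet_Icc]
    with t htT htI
  exact hfg t ⟨htI, htT⟩

theorem intervalIntegrable_comp_of_bounded {E F : Type*} [NormedAddCommGroup E] [ProperSpace E]
    [NormedAddCommGroup F] {f : ℝ × E → F} (hf : Continuous f) {u : ℝ → E} {a b M : ℝ}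
    (hab : a ≤ b) (hu : AEStronglyMeasurable u (volume.restrict (Icc a b)))
    (hM : ∀ t ∈ Icc a b, ‖u t‖ ≤ M) :
    IntervalIntegrable (fun t => f (t, u t)) volume a b := by
  obtain ⟨C, hC⟩ := ((isCompact_Icc (a := a) (b := b)).prod
    (isCompact_closedBall (0 : E) M)).exists_bound_of_continuousOn hf.continuousOn
  rw [intervalIntegrable_iff_integrableOn_Icc_of_le hab]
  refine IntegrableOn.of_bound measure_Icc_lt_top
    (hf.comp_aestronglyMeasurable (aestronglyMeasurable_id.prodMk hu)) C ?_
  filter_upwards [ae_restrict_mem measurableSet_Icc] with t ht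
  exact hC (t, u t) ⟨ht, mem_closedBall_zero_iff.2 (hM t ht)⟩

theorem ContinuousOn.hasDerivAt_primitive_of_mem_Ioo {E : Type*} [NormedAddCommGroup E]
    [NormedSpace ℝ E] [CompleteSpace E] {f : ℝ → E} {a b t : ℝ} (hf : ContinuousOn f (Icc a b))
    (ht : t ∈ Ioo a b) : HasDerivAt (fun u => ∫ x in a..u, f x) (f t) t := by
  refine intervalIntegral.integral_hasDerivAt_right ?_
    (hf.mono Ioo_subset_Icc_self |>.stronglyMeasurableAtFilter isOpen_Ioo t ht)
    (hf.continuousAt (Icc_mem_nhds ht.1 ht.2))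
  exact (hf.mono (Icc_subset_Icc_right ht.2.le)).intervalIntegrable_of_Icc ht.1.le

theorem ContinuousOn.continuousOn_primitive_Icc {E : Type*} [NormedAddCommGroup E]
    [NormedSpace ℝ E] [CompleteSpace E] {f : ℝ → E} {a b : ℝ} (hab : a ≤ b)
    (hf : ContinuousOn f (Icc a b)) : ContinuousOn (fun u => ∫ x in a..u, f x) (Icc a b) := by
  rw [← uIcc_of_le hab] at hf ⊢
  exact intervalIntegral.continuousOn_primitive_interval (hf.integrableOn_compact isCompact_uIcc)

theorem inner_gradient_le_sub_of_hessian_nonneg {E : Type*} [NormedAddCommGroup E]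
    [InnerProductSpace ℝ E] [CompleteSpace E] {f : E → ℝ} {g : E → E} {H : E → E →L[ℝ] E}
    {a Δ : E} (hg : ∀ v, HasGradientAt f (g v) v) (hH : ∀ v, HasFDerivAt g (H v) v)
    (hpos : ∀ θ ∈ Ioo (0 : ℝ) 1, 0 ≤ ⟪Δ, H (a + θ • Δ) Δ⟫) :
    ⟪g a, Δ⟫ ≤ f (a + Δ) - f a := by
  have hline : ∀ θ : ℝ, HasDerivAt (fun θ : ℝ => a + θ • Δ) Δ θ := fun θ => by
    simpa using ((hasDerivAt_id θ).smul_const Δ).const_add a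
  have hφ : ∀ θ : ℝ, HasDerivAt (fun θ => f (a + θ • Δ)) ⟪g (a + θ • Δ), Δ⟫ θ := fun θ => by
    have h := (hg _).hasFDerivAt.comp_hasDerivAt θ (hline θ)
    rwa [InnerProductSpace.toDual_apply_apply] at h
  have hk : ∀ θ : ℝ, HasDerivAt (fun θ => ⟪g (a + θ • Δ), Δ⟫) ⟪Δ, H (a + θ • Δ) Δ⟫ θ :=
    fun θ => by
      simpa [real_inner_comm] using
        ((hH _).comp_hasDerivAt θ (hline θ)).inner ℝ (hasDerivAt_const θ Δ)
  -- Mean value theorem for `θ ↦ f (a + θ • Δ)` on `[0, 1]`, then for its derivative on `[0, ξ]`.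
  obtain ⟨ξ, hξ, hslope⟩ := exists_hasDerivAt_eq_slope _ _ zero_lt_one
    (fun θ _ => (hφ θ).continuousAt.continuousWithinAt) (fun θ _ => hφ θ)
  obtain ⟨η, hη, hslope'⟩ := exists_hasDerivAt_eq_slope _ _ hξ.1
    (fun θ _ => (hk θ).continuousAt.continuousWithinAt) (fun θ _ => hk θ)
  have hη01 : η ∈ Ioo (0 : ℝ) 1 := ⟨hη.1, hη.2.trans hξ.2⟩
  have hmono : ⟪g a, Δ⟫ ≤ ⟪g (a + ξ • Δ), Δ⟫ := by
    have h := hpos η hη01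
    rw [hslope', le_div_iff₀ (sub_pos.2 hξ.1)] at h
    simpa using h
  simpa [hslope] using hmono

namespace PiecewiseC1On

variable {E : Type*} [NormedAddCommGroup E] [NormedSpace ℝ E] {a b : ℝ} {S T : Finset ℝ}
  {x dx y dy : ℝ → E}

theorem sub (hx : PiecewiseC1On a b S x dx) (hy : PiecewiseC1On a b T y dy) :
    PiecewiseC1On a b (S ∪ T) (x - y) (dx - dy) := by
  obtain ⟨hxc, ⟨M, hM⟩, hxd, hdxc⟩ := hx
  obtain ⟨hyc, ⟨N, hN⟩, hyd, hdyc⟩ := hy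
  have hS : Icc a b \ ↑(S ∪ T) ⊆ Icc a b \ S := sdiff_subset_sdiff_right (by simp)
  have hT : Icc a b \ ↑(S ∪ T) ⊆ Icc a b \ T := sdiff_subset_sdiff_right (by simp)
  refine ⟨hxc.sub hyc, ⟨M + N, fun t ht => ?_⟩, fun t ht => (hxd t (hS ht)).sub (hyd t (hT ht)),
    (hdxc.mono hS).sub (hdyc.mono hT)⟩
  exact (norm_sub_le _ _).trans (add_le_add (hM t ht) (hN t ht))

theorem hasDerivAt (hx : PiecewiseC1On a b S x dx) {t : ℝ} (ht : t ∈ Ioo a b \ S) :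
    HasDerivAt x (dx t) t :=
  (hx.2.2.1 t ⟨Ioo_subset_Icc_self ht.1, ht.2⟩).hasDerivAt (Icc_mem_nhds ht.1.1 ht.1.2)

theorem aestronglyMeasurable_deriv (hx : PiecewiseC1On a b S x dx) :
    AEStronglyMeasurable dx (volume.restrict (Icc a b)) := by
  have hae : Icc a b \ (S : Set ℝ) =ᵐ[volume] Icc a b :=
    sdiff_ae_eq_self.2 (measure_mono_null inter_subset_right (S.countable_toSet.measure_zero _))
  rw [← Measure.restrict_congr_set hae]
  exact hx.2.2.2.aestronglyMeasurable (measurableSet_Icc.diff S.finite_toSet.measurableSet)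

theorem intervalIntegrable_comp [ProperSpace E] {F : Type*} [NormedAddCommGroup F]
    {f : ℝ × E × E → F} (hf : Continuous f) (hab : a ≤ b) (hx : PiecewiseC1On a b S x dx) :
    IntervalIntegrable (fun t => f (t, x t, dx t)) volume a b := by
  obtain ⟨C, hC⟩ := isCompact_Icc.exists_bound_of_continuousOn hx.1
  obtain ⟨M, hM⟩ := hx.2.1
  refine intervalIntegrable_comp_of_bounded hf hab
    ((hx.1.aestronglyMeasurable measurableSet_Icc).prodMk hx.aestronglyMeasurable_deriv)
    (M := max C M) fun t ht => ?_
  rw [Prod.norm_def]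
  exact max_le_max (hC t ht) (hM t ht)

end PiecewiseC1On

section InnerByParts

variable {E : Type*} [NormedAddCommGroup E] [InnerProductSpace ℝ E] {a b : ℝ} {S : Finset ℝ}
  {u du p p' : ℝ → E}

theorem PiecewiseC1On.intervalIntegrable_inner_add_inner (hab : a ≤ b)
    (hu : PiecewiseC1On a b S u du) (hp : ContinuousOn p (Icc a b))
    (hp' : ContinuousOn p' (Icc a b)) :
    IntervalIntegrable (fun t => ⟪p t, du t⟫ + ⟪p' t, u t⟫) volume a b := by
  refine IntervalIntegrable.add ?_ ((hp'.inner hu.1).intervalIntegrable_of_Icc hab)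
  obtain ⟨C, hC⟩ := isCompact_Icc.exists_bound_of_continuousOn hp
  obtain ⟨M, hM⟩ := hu.2.1
  rw [intervalIntegrable_iff_integrableOn_Icc_of_le hab]
  refine IntegrableOn.of_bound measure_Icc_lt_top
    ((hp.aestronglyMeasurable measurableSet_Icc).inner hu.aestronglyMeasurable_deriv) (C * M) ?_
  filter_upwards [ae_restrict_mem measurableSet_Icc] with t ht
  exact (norm_inner_le_norm _ _).trans
    (mul_le_mul (hC t ht) (hM t ht) (norm_nonneg _) ((norm_nonneg _).trans (hC t ht)))

theorem PiecewiseC1On.integral_inner_add_inner_eq (hab : a ≤ b)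
    (hu : PiecewiseC1On a b S u du) (hp : ContinuousOn p (Icc a b))
    (hp' : ContinuousOn p' (Icc a b)) (hpd : ∀ t ∈ Ioo a b, HasDerivAt p (p' t) t) :
    ∫ t in a..b, (⟪p t, du t⟫ + ⟪p' t, u t⟫) = ⟪p b, u b⟫ - ⟪p a, u a⟫ :=
  integral_eq_of_hasDerivAt_off_countable_of_le _ _ hab S.countable_toSet (hp.inner hu.1)
    (fun t ht => (hpd t ht.1).inner ℝ (hu.hasDerivAt ht))
    (hu.intervalIntegrable_inner_add_inner hab hp hp')

end InnerByParts

theorem stmt16_general {n : ℕ} (t₀ t₁ : ℝ) (hlt : t₀ < t₁)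
    (L0 L1 : ℝ → EuclideanSpace ℝ (Fin n) → ℝ)
    (G0 G1 : ℝ → EuclideanSpace ℝ (Fin n) → EuclideanSpace ℝ (Fin n))
    (H1 : ℝ → EuclideanSpace ℝ (Fin n) →
      (EuclideanSpace ℝ (Fin n) →L[ℝ] EuclideanSpace ℝ (Fin n)))
    (hL0 : Continuous fun p : ℝ × EuclideanSpace ℝ (Fin n) => L0 p.1 p.2)
    (hL1 : Continuous fun p : ℝ × EuclideanSpace ℝ (Fin n) => L1 p.1 p.2)
    (hG1 : Continuous fun p : ℝ × EuclideanSpace ℝ (Fin n) => G1 p.1 p.2)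
    (hgrad1 : ∀ t x, HasGradientAt (L1 t) (G1 t x) x)
    (hhess1 : ∀ t x, HasFDerivAt (G1 t) (H1 t x) x)
    (xbar dxbar : ℝ → EuclideanSpace ℝ (Fin n)) (S : Finset ℝ)
    (hxbar : PiecewiseC1On t₀ t₁ S xbar dxbar)
    (c : EuclideanSpace ℝ (Fin n))
    (heuler : ∀ t ∈ Set.Icc t₀ t₁ \ (S : Set ℝ),
      G0 t (dxbar t) - ∫ ν in t₀..t, G1 ν (xbar ν) = c)
    (hweier : ∀ t ∈ Set.Icc t₀ t₁ \ (S : Set ℝ), ∀ ξ : EuclideanSpace ℝ (Fin n),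
      L0 t (dxbar t + ξ) - L0 t (dxbar t) - ⟪G0 t (dxbar t), ξ⟫ ≥ 0)
    (hlegendre : ∀ t ∈ Set.Icc t₀ t₁ \ (S : Set ℝ), ∀ η : EuclideanSpace ℝ (Fin n),
      ∀ θ ∈ Set.Ioo (0:ℝ) 1, ⟪η, H1 t (xbar t + θ • η) η⟫ ≥ 0)
    (x dx : ℝ → EuclideanSpace ℝ (Fin n)) (S' : Finset ℝ)
    (hx : PiecewiseC1On t₀ t₁ S' x dx)
    (hb0 : x t₀ = xbar t₀) (hb1 : x t₁ = xbar t₁) :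
    (∫ t in t₀..t₁, (L0 t (dx t) + L1 t (x t))) ≥
      ∫ t in t₀..t₁, (L0 t (dxbar t) + L1 t (xbar t)) := by
  set p : ℝ → EuclideanSpace ℝ (Fin n) := fun t => c + ∫ ν in t₀..t, G1 ν (xbar ν)
  have hψ : ContinuousOn (fun t => G1 t (xbar t)) (Icc t₀ t₁) :=
    hG1.comp_continuousOn (continuousOn_id.prodMk hxbar.1)
  have hp : ContinuousOn p (Icc t₀ t₁) :=
    continuousOn_const.add (hψ.continuousOn_primitive_Icc hlt.le)
  have hpd : ∀ t ∈ Ioo t₀ t₁, HasDerivAt p (G1 t (xbar t)) t := fun t ht =>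
    (hψ.hasDerivAt_primitive_of_mem_Ioo ht).const_add c
  have hEuler : ∀ t ∈ Icc t₀ t₁ \ (S : Set ℝ), G0 t (dxbar t) = p t := fun t ht => by
    simp only [p, ← heuler t ht, sub_add_cancel]
  have hΔ := hx.sub hxbar
  have hparts := hΔ.integral_inner_add_inner_eq hlt.le hp hψ hpd
  simp only [Pi.sub_apply, hb0, hb1, sub_self, inner_zero_right] at hparts
  have hL : Continuous fun q : ℝ × EuclideanSpace ℝ (Fin n) × EuclideanSpace ℝ (Fin n) =>
      L0 q.1 q.2.2 + L1 q.1 q.2.1 :=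
    (hL0.comp (continuous_fst.prodMk (continuous_snd.comp continuous_snd))).add
      (hL1.comp (continuous_fst.prodMk (continuous_fst.comp continuous_snd)))
  rw [ge_iff_le, ← sub_nonneg, ← intervalIntegral.integral_sub
    (hx.intervalIntegrable_comp hL hlt.le) (hxbar.intervalIntegrable_comp hL hlt.le), ← hparts]
  refine intervalIntegral.integral_mono_of_le_off_countable hlt.le S.countable_toSet
    (hΔ.intervalIntegrable_inner_add_inner hlt.le hp hψ)
    ((hx.intervalIntegrable_comp hL hlt.le).sub (hxbar.intervalIntegrable_comp hL hlt.le))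
    fun t ht => ?_
  have hL0inc := hweier t ht (dx t - dxbar t)
  rw [add_sub_cancel, hEuler t ht] at hL0inc
  have hL1inc := inner_gradient_le_sub_of_hessian_nonneg (hgrad1 t) (hhess1 t)
    (fun θ hθ => hlegendre t ht (x t - xbar t) θ hθ)
  rw [add_sub_cancel] at hL1inc
  dsimp only
  linarith

/-- Theorem 4.4: for `L(t,x,ẋ) = L⁰(t,ẋ) + L¹(t,x)`, if along the admissible
extremal `x̄` the Weierstrass excess of `L⁰` is nonnegative for all `ξ ∈ ℝⁿ`
and `ηᵀL¹_xx(t, x̄(t)+θη)η ≥ 0` for all `η`, `θ ∈ (0,1)` and non-corner `t`,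
then `x̄` is an absolute minimizer. -/
theorem stmt16 {n : ℕ} (t₀ t₁ : ℝ) (hlt : t₀ < t₁)
    (L0 L1 : ℝ → EuclideanSpace ℝ (Fin n) → ℝ)
    (G0 G1 : ℝ → EuclideanSpace ℝ (Fin n) → EuclideanSpace ℝ (Fin n))
    (H1 : ℝ → EuclideanSpace ℝ (Fin n) →
      (EuclideanSpace ℝ (Fin n) →L[ℝ] EuclideanSpace ℝ (Fin n)))
    (hL0 : Continuous fun p : ℝ × EuclideanSpace ℝ (Fin n) => L0 p.1 p.2)
    (hL1 : Continuous fun p : ℝ × EuclideanSpace ℝ (Fin n) => L1 p.1 p.2)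
    (hG0 : Continuous fun p : ℝ × EuclideanSpace ℝ (Fin n) => G0 p.1 p.2)
    (hG1 : Continuous fun p : ℝ × EuclideanSpace ℝ (Fin n) => G1 p.1 p.2)
    (hH1 : Continuous fun p : ℝ × EuclideanSpace ℝ (Fin n) => H1 p.1 p.2)
    (hgrad0 : ∀ t y, HasGradientAt (L0 t) (G0 t y) y)
    (hgrad1 : ∀ t x, HasGradientAt (L1 t) (G1 t x) x)
    (hhess1 : ∀ t x, HasFDerivAt (G1 t) (H1 t x) x)
    (xbar dxbar : ℝ → EuclideanSpace ℝ (Fin n)) (S : Finset ℝ)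
    (hxbar : PiecewiseC1On t₀ t₁ S xbar dxbar)
    (c : EuclideanSpace ℝ (Fin n))
    (heuler : ∀ t ∈ Set.Icc t₀ t₁ \ (S : Set ℝ),
      G0 t (dxbar t) - ∫ ν in t₀..t, G1 ν (xbar ν) = c)
    (hweier : ∀ t ∈ Set.Icc t₀ t₁ \ (S : Set ℝ), ∀ ξ : EuclideanSpace ℝ (Fin n),
      L0 t (dxbar t + ξ) - L0 t (dxbar t) - ⟪G0 t (dxbar t), ξ⟫ ≥ 0)
    (hlegendre : ∀ t ∈ Set.Icc t₀ t₁ \ (S : Set ℝ), ∀ η : EuclideanSpace ℝ (Fin n),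
      ∀ θ ∈ Set.Ioo (0:ℝ) 1, ⟪η, H1 t (xbar t + θ • η) η⟫ ≥ 0)
    (x dx : ℝ → EuclideanSpace ℝ (Fin n)) (S' : Finset ℝ)
    (hx : PiecewiseC1On t₀ t₁ S' x dx)
    (hb0 : x t₀ = xbar t₀) (hb1 : x t₁ = xbar t₁) :
    (∫ t in t₀..t₁, (L0 t (dx t) + L1 t (x t))) ≥
      ∫ t in t₀..t₁, (L0 t (dxbar t) + L1 t (xbar t)) :=
  stmt16_general t₀ t₁ hlt L0 L1 G0 G1 H1 hL0 hL1 hG1 hgrad1 hhess1 xbar dxbar S hxbar c heuler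
    hweier hlegendre x dx S' hx hb0 hb1
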